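/- If compact metric spaces Z₁ and Z₂ both satisfy the Lipschitz-minimal-property, then the product Z₁ × Z₂ (with, e.g., the max metric) also satisfies the Lipschitz-minimal-property. -/

import Mathlib

/-- The uniform metric on the homeomorphism group of a metric space. -/
noncomputable def uD {Z : Type*} [MetricSpace Z] (f g : Z ≃ₜ Z) : ℝ :=
  (⨆ z : Z, dist (f z) (g z)) + ⨆ z : Z, dist (f.symm z) (g.symm z)

/-- A path (for the uniform metric) inside a set `S` of homeomorphisms from `f` to `g`. -/
def PathInH {Z : Type*} [MetricSpace Z] (S : Set (Z ≃ₜ Z)) (f g : Z ≃ₜ Z) : Prop :=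
  ∃ γ : ℝ → Z ≃ₜ Z, γ 0 = f ∧ γ 1 = g ∧ (∀ t ∈ Set.Icc (0:ℝ) 1, γ t ∈ S) ∧
    ∀ t ∈ Set.Icc (0:ℝ) 1, ∀ ε > (0:ℝ), ∃ δ > (0:ℝ),
      ∀ s ∈ Set.Icc (0:ℝ) 1, |s - t| < δ → uD (γ s) (γ t) < ε

/-- A set of homeomorphisms acts minimally: finitely many images of any nonempty open set
cover the space. -/
def ActsMinimally {Z : Type*} [TopologicalSpace Z] (M : Set (Z ≃ₜ Z)) : Prop :=
  ∀ O : Set Z, IsOpen O → O.Nonempty →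
    ∃ F : Finset (Z ≃ₜ Z), ↑F ⊆ M ∧ (⋃ h ∈ F, ⇑h '' O) = Set.univ

/-- The Lipschitz-minimal-property: there are `L > 0` and a pathwise connected set `M` of
`L`-Lipschitz homeomorphisms in the identity path component which acts minimally. -/
def LMP (Z : Type*) [MetricSpace Z] : Prop :=
  ∃ L : ℝ, 0 < L ∧ ∃ M : Set (Z ≃ₜ Z),
    (∀ f ∈ M, (∀ z₁ z₂ : Z, dist (f z₁) (f z₂) ≤ L * dist z₁ z₂) ∧
      PathInH Set.univ (Homeomorph.refl Z) f) ∧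
    (∀ f ∈ M, ∀ g ∈ M, PathInH M f g) ∧
    ActsMinimally M

/-!
Take the products `f₁ × f₂` of members of the two minimal sets. For the max metric, `f₁ × f₂`
is `max L₁ L₂`-Lipschitz, and the uniform distance between two products is at most the sum of
the uniform distances of the factors, so paths in the factors combine to a path of products.
A nonempty open subset of `Z₁ × Z₂` contains a box `U₁ × U₂`; if the `a '' U₁` cover `Z₁` and
the `b '' U₂` cover `Z₂`, then the finitely many `(a × b) '' (U₁ × U₂)` cover `Z₁ × Z₂`.
-/

open Set

section Product

variable {X₁ X₂ Y₁ Y₂ : Type*} [MetricSpace X₁] [MetricSpace X₂] [MetricSpace Y₁] [MetricSpace Y₂]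

theorem dist_prodMap_le_max_mul {f₁ : X₁ → Y₁} {f₂ : X₂ → Y₂} {L₁ L₂ : ℝ} (hL₁ : 0 ≤ L₁)
    (hf₁ : ∀ x y, dist (f₁ x) (f₁ y) ≤ L₁ * dist x y)
    (hf₂ : ∀ x y, dist (f₂ x) (f₂ y) ≤ L₂ * dist x y) (p q : X₁ × X₂) :
    dist (Prod.map f₁ f₂ p) (Prod.map f₁ f₂ q) ≤ max L₁ L₂ * dist p q := by
  rw [Prod.dist_eq, Prod.dist_eq]
  apply max_le
  · calc dist (f₁ p.1) (f₁ q.1) ≤ L₁ * dist p.1 q.1 := hf₁ _ _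
      _ ≤ max L₁ L₂ * max (dist p.1 q.1) (dist p.2 q.2) := by gcongr <;> simp
  · calc dist (f₂ p.2) (f₂ q.2) ≤ L₂ * dist p.2 q.2 := hf₂ _ _
      _ ≤ max L₁ L₂ * max (dist p.1 q.1) (dist p.2 q.2) := by gcongr <;> simp

theorem iSup_dist_prodMap_le [CompactSpace X₁] [CompactSpace X₂]
    {f₁ g₁ : X₁ → Y₁} {f₂ g₂ : X₂ → Y₂} (hf₁ : Continuous f₁) (hg₁ : Continuous g₁)
    (hf₂ : Continuous f₂) (hg₂ : Continuous g₂) :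
    ⨆ p : X₁ × X₂, dist (Prod.map f₁ f₂ p) (Prod.map g₁ g₂ p) ≤
      (⨆ x, dist (f₁ x) (g₁ x)) + ⨆ x, dist (f₂ x) (g₂ x) := by
  have hbdd₁ := (isCompact_range (hf₁.dist hg₁)).bddAbove
  have hbdd₂ := (isCompact_range (hf₂.dist hg₂)).bddAbove
  have hnonneg₁ : 0 ≤ ⨆ x, dist (f₁ x) (g₁ x) := Real.iSup_nonneg fun _ => dist_nonneg
  have hnonneg₂ : 0 ≤ ⨆ x, dist (f₂ x) (g₂ x) := Real.iSup_nonneg fun _ => dist_nonneg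
  refine Real.iSup_le (fun p => ?_) (add_nonneg hnonneg₁ hnonneg₂)
  rw [Prod.dist_eq]
  exact max_le (le_add_of_le_of_nonneg (le_ciSup hbdd₁ p.1) hnonneg₂)
    (le_add_of_nonneg_of_le hnonneg₁ (le_ciSup hbdd₂ p.2))

end Product

section Homeomorphisms

variable {Z₁ Z₂ : Type*} [MetricSpace Z₁] [MetricSpace Z₂]

theorem uD_prodCongr_le [CompactSpace Z₁] [CompactSpace Z₂] (f₁ g₁ : Z₁ ≃ₜ Z₁)
    (f₂ g₂ : Z₂ ≃ₜ Z₂) :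
    uD (f₁.prodCongr f₂) (g₁.prodCongr g₂) ≤ uD f₁ g₁ + uD f₂ g₂ := by
  have hforward := iSup_dist_prodMap_le f₁.continuous g₁.continuous f₂.continuous g₂.continuous
  have hinverse := iSup_dist_prodMap_le f₁.symm.continuous g₁.symm.continuous
    f₂.symm.continuous g₂.symm.continuous
  simp only [uD, Homeomorph.prodCongr_symm, Homeomorph.coe_prodCongr]
  linarith

theorem PathInH.mono {S T : Set (Z₁ ≃ₜ Z₁)} {f g : Z₁ ≃ₜ Z₁} (h : PathInH S f g) (hST : S ⊆ T) :
    PathInH T f g := by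
  obtain ⟨γ, hγ0, hγ1, hγS, hγcont⟩ := h
  exact ⟨γ, hγ0, hγ1, fun t ht => hST (hγS t ht), hγcont⟩

theorem PathInH.prodCongr [CompactSpace Z₁] [CompactSpace Z₂]
    {S₁ : Set (Z₁ ≃ₜ Z₁)} {S₂ : Set (Z₂ ≃ₜ Z₂)} {f₁ g₁ : Z₁ ≃ₜ Z₁} {f₂ g₂ : Z₂ ≃ₜ Z₂}
    (h₁ : PathInH S₁ f₁ g₁) (h₂ : PathInH S₂ f₂ g₂) :
    PathInH (image2 Homeomorph.prodCongr S₁ S₂) (f₁.prodCongr f₂) (g₁.prodCongr g₂) := by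
  obtain ⟨γ₁, rfl, rfl, hγ₁S, hγ₁cont⟩ := h₁
  obtain ⟨γ₂, rfl, rfl, hγ₂S, hγ₂cont⟩ := h₂
  refine ⟨fun t => (γ₁ t).prodCongr (γ₂ t), rfl, rfl,
    fun t ht => mem_image2_of_mem (hγ₁S t ht) (hγ₂S t ht), fun t ht ε hε => ?_⟩
  obtain ⟨δ₁, hδ₁, hclose₁⟩ := hγ₁cont t ht (ε / 2) (half_pos hε)
  obtain ⟨δ₂, hδ₂, hclose₂⟩ := hγ₂cont t ht (ε / 2) (half_pos hε)
  refine ⟨min δ₁ δ₂, lt_min hδ₁ hδ₂, fun s hs hst => ?_⟩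
  calc uD ((γ₁ s).prodCongr (γ₂ s)) ((γ₁ t).prodCongr (γ₂ t))
      ≤ uD (γ₁ s) (γ₁ t) + uD (γ₂ s) (γ₂ t) := uD_prodCongr_le _ _ _ _
    _ < ε / 2 + ε / 2 := add_lt_add (hclose₁ s hs (hst.trans_le (min_le_left _ _)))
        (hclose₂ s hs (hst.trans_le (min_le_right _ _)))
    _ = ε := add_halves ε

theorem ActsMinimally.image2_prodCongr {M₁ : Set (Z₁ ≃ₜ Z₁)} {M₂ : Set (Z₂ ≃ₜ Z₂)}
    (h₁ : ActsMinimally M₁) (h₂ : ActsMinimally M₂) :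
    ActsMinimally (image2 Homeomorph.prodCongr M₁ M₂) := by
  classical
  rintro O hO ⟨⟨p, q⟩, hpq⟩
  obtain ⟨U₁, U₂, hU₁, hU₂, hp, hq, hUO⟩ := isOpen_prod_iff.mp hO p q hpq
  obtain ⟨F₁, hF₁M, hF₁cover⟩ := h₁ U₁ hU₁ ⟨p, hp⟩
  obtain ⟨F₂, hF₂M, hF₂cover⟩ := h₂ U₂ hU₂ ⟨q, hq⟩
  refine ⟨Finset.image₂ Homeomorph.prodCongr F₁ F₂, ?_, eq_univ_of_forall fun ⟨x, y⟩ => ?_⟩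
  · rw [Finset.coe_image₂]
    exact image2_subset hF₁M hF₂M
  obtain ⟨a, haF, u, hu, rfl⟩ : ∃ a ∈ F₁, ∃ u ∈ U₁, a u = x := by
    simpa using (hF₁cover ▸ mem_univ x : x ∈ ⋃ h ∈ F₁, ⇑h '' U₁)
  obtain ⟨b, hbF, v, hv, rfl⟩ : ∃ b ∈ F₂, ∃ v ∈ U₂, b v = y := by
    simpa using (hF₂cover ▸ mem_univ y : y ∈ ⋃ h ∈ F₂, ⇑h '' U₂)
  exact mem_iUnion₂.mpr
    ⟨a.prodCongr b, Finset.mem_image₂_of_mem haF hbF, (u, v), hUO ⟨hu, hv⟩, rfl⟩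

end Homeomorphisms

/-- The Lipschitz-minimal-property is preserved by products of compact metric spaces. -/
theorem stmt_12 (Z₁ Z₂ : Type*) [MetricSpace Z₁] [MetricSpace Z₂]
    [CompactSpace Z₁] [CompactSpace Z₂] (h1 : LMP Z₁) (h2 : LMP Z₂) :
    LMP (Z₁ × Z₂) := by
  obtain ⟨L₁, hL₁, M₁, hM₁, hM₁path, hM₁min⟩ := h1
  obtain ⟨L₂, -, M₂, hM₂, hM₂path, hM₂min⟩ := h2
  refine ⟨max L₁ L₂, lt_max_of_lt_left hL₁, image2 Homeomorph.prodCongr M₁ M₂, ?_, ?_,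
    hM₁min.image2_prodCongr hM₂min⟩
  · rintro _ ⟨a, ha, b, hb, rfl⟩
    exact ⟨dist_prodMap_le_max_mul hL₁.le (hM₁ a ha).1 (hM₂ b hb).1,
      ((hM₁ a ha).2.prodCongr (hM₂ b hb).2).mono (subset_univ _)⟩
  · rintro _ ⟨a, ha, b, hb, rfl⟩ _ ⟨c, hc, d, hd, rfl⟩
    exact (hM₁path a ha c hc).prodCongr (hM₂path b hb d hd)
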